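/- Let (H, g) be a finite type unimodular pivotal Hopf G-coalgebra over a field k and let t be a right modified trace on H-pmod. Define ν_α : H_α → k by ν_α(h) := t_{H_α}(R_h), where R_h : H_α → H_α, x ↦ xh, is right multiplication on the left regular module. Then ν = (ν_α)_{α∈G} satisfies the defining relation of a symmetrised right G-integral: ν_α(h_{(1)}) · g_β h_{(2)} = ν_{αβ}(h) · 1_β for all α, β ∈ G and h ∈ H_{αβ}, where Δ_{α,β}(h) = h_{(1)} ⊗ h_{(2)}; equivalently, the family μ_α(x) := ν_α(g_α⁻¹ x) is a right G-integral for H. -/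

import Mathlib

open scoped TensorProduct

/-- Transport along an equality of indices, as an algebra isomorphism. -/
def castAlg (k : Type) [CommSemiring k] {G : Type} {H : G → Type}
    [∀ γ : G, Ring (H γ)] [∀ γ : G, Algebra k (H γ)]
    {γ γ' : G} (h : γ = γ') : H γ ≃ₐ[k] H γ' := by
  subst h; exact AlgEquiv.refl

/-- A Hopf `G`-coalgebra over a field `k`. -/
structure HopfGCoalgebra (k G : Type) [Field k] [Group G] (H : G → Type)
    [∀ γ : G, Ring (H γ)] [∀ γ : G, Algebra k (H γ)] where
  Δ : ∀ α β : G, H (α * β) →ₐ[k] (H α ⊗[k] H β)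
  ε : H (1 : G) →ₐ[k] k
  S : ∀ γ : G, H γ →ₗ[k] H γ⁻¹
  coassoc : ∀ (α β γ : G) (x : H (α * β * γ)),
    (TensorProduct.map (Δ α β).toLinearMap LinearMap.id) (Δ (α * β) γ x)
      = (TensorProduct.assoc k (H α) (H β) (H γ)).symm
          ((TensorProduct.map LinearMap.id (Δ β γ).toLinearMap)
            (Δ α (β * γ) (castAlg k (mul_assoc α β γ) x)))
  counit_right : ∀ (α : G) (x : H (α * 1)),
    (TensorProduct.rid k (H α)) ((TensorProduct.map LinearMap.id ε.toLinearMap) (Δ α 1 x))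
      = castAlg k (mul_one α) x
  counit_left : ∀ (α : G) (x : H (1 * α)),
    (TensorProduct.lid k (H α)) ((TensorProduct.map ε.toLinearMap LinearMap.id) (Δ 1 α x))
      = castAlg k (one_mul α) x
  antipode_left : ∀ (α : G) (x : H (α⁻¹ * α)),
    (LinearMap.mul' k (H α))
      ((TensorProduct.map ((castAlg k (inv_inv α)).toLinearMap ∘ₗ S α⁻¹) LinearMap.id)
        (Δ α⁻¹ α x))
      = ε (castAlg k (inv_mul_cancel α) x) • 1
  antipode_right : ∀ (α : G) (x : H (α * α⁻¹)),
    (LinearMap.mul' k (H α))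
      ((TensorProduct.map LinearMap.id ((castAlg k (inv_inv α)).toLinearMap ∘ₗ S α⁻¹))
        (Δ α α⁻¹ x))
      = ε (castAlg k (mul_inv_cancel α) x) • 1

namespace HopfGCoalgebra

variable {k G : Type} [Field k] [Group G] {H : G → Type}
  [∀ γ : G, Ring (H γ)] [∀ γ : G, Algebra k (H γ)]

/-- A family of linear forms is a right `G`-integral. -/
def IsRightIntegral (D : HopfGCoalgebra k G H) (μ : ∀ γ : G, H γ →ₗ[k] k) : Prop :=
  ∀ (α β : G) (x : H (α * β)),
    (TensorProduct.lid k (H β)) ((TensorProduct.map (μ α) LinearMap.id) (D.Δ α β x))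
      = μ (α * β) x • 1

/-- A family of linear forms is a left `G`-integral. -/
def IsLeftIntegral (D : HopfGCoalgebra k G H) (μ : ∀ γ : G, H γ →ₗ[k] k) : Prop :=
  ∀ (α β : G) (x : H (α * β)),
    (TensorProduct.rid k (H α)) ((TensorProduct.map LinearMap.id (μ β)) (D.Δ α β x))
      = μ (α * β) x • 1

/-- A family of invertible elements is a pivot. -/
structure IsPivot (D : HopfGCoalgebra k G H) (g : ∀ γ : G, (H γ)ˣ) : Prop where
  delta : ∀ α β : G, D.Δ α β (g (α * β) : H (α * β)) = (g α : H α) ⊗ₜ[k] (g β : H β)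
  counit : D.ε (g 1 : H 1) = 1
  antipode : ∀ (α : G) (x : H α),
    castAlg k (inv_inv α) (D.S α⁻¹ (D.S α x)) = (g α : H α) * x * ((g α)⁻¹ : (H α)ˣ)

/-- `H` is unimodular if `H₁` admits a nonzero two-sided cointegral. -/
def IsUnimodular (D : HopfGCoalgebra k G H) : Prop :=
  ∃ Λ : H 1, Λ ≠ 0 ∧ ∀ h : H 1, h * Λ = D.ε h • Λ ∧ Λ * h = D.ε h • Λ

/-- A `G`-comodulus for a right `G`-integral `μ`. -/
structure IsComodulus (D : HopfGCoalgebra k G H) (μ : ∀ γ : G, H γ →ₗ[k] k)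
    (a : ∀ γ : G, (H γ)ˣ) : Prop where
  delta : ∀ α β : G, D.Δ α β (a (α * β) : H (α * β)) = (a α : H α) ⊗ₜ[k] (a β : H β)
  counit : D.ε (a 1 : H 1) = 1
  rel : ∀ (α β : G) (x : H (α * β)),
    (TensorProduct.rid k (H α)) ((TensorProduct.map LinearMap.id (μ β)) (D.Δ α β x))
      = μ (α * β) x • (a α : H α)

end HopfGCoalgebra

namespace HopfGCoalgebra

variable {k G : Type} [Field k] [Group G] {H : G → Type}
  [∀ γ : G, Ring (H γ)] [∀ γ : G, Algebra k (H γ)]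

/-- The trivial `H₁`-module structure on a `k`-vector space, `h • w = ε(h) • w`. -/
def trivialModule (D : HopfGCoalgebra k G H) (W : Type) [AddCommGroup W] [Module k W] :
    Module (H (1 : G)) W :=
  Module.compHom W D.ε.toRingHom

theorem trivialModuleTower (D : HopfGCoalgebra k G H) (W : Type) [AddCommGroup W]
    [Module k W] :
    letI := D.trivialModule W
    IsScalarTower k (H (1 : G)) W := by
  letI := D.trivialModule W
  refine ⟨fun c h w => ?_⟩
  show D.ε (c • h) • w = c • (D.ε h • w)
  rw [map_smul, smul_eq_mul, mul_smul]

/-- The representation of `H_γ` (for `γ = αβ`) on `P ⊗ W` obtained from an `H_α`-module `P`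
and an `H_β`-module `W` through the coproduct `Δ_{α,β}`. -/
noncomputable def deltaRep (D : HopfGCoalgebra k G H) (α β γ : G) (hγ : γ = α * β)
    (P W : Type) [AddCommGroup P] [Module k P] [Module (H α) P] [IsScalarTower k (H α) P]
    [AddCommGroup W] [Module k W] [Module (H β) W] [IsScalarTower k (H β) W] :
    H γ →ₐ[k] Module.End k (P ⊗[k] W) :=
  (Module.endTensorEndAlgHom.comp
      (Algebra.TensorProduct.map (Algebra.lsmul k k P) (Algebra.lsmul k k W))).comp
    ((D.Δ α β).comp (castAlg k hγ).toAlgHom)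

/-- The `H_γ`-module structure on `P ⊗ W` (for `γ = αβ`) induced by `Δ_{α,β}`. -/
noncomputable def tensorModule (D : HopfGCoalgebra k G H) (α β γ : G) (hγ : γ = α * β)
    (P W : Type) [AddCommGroup P] [Module k P] [Module (H α) P] [IsScalarTower k (H α) P]
    [AddCommGroup W] [Module k W] [Module (H β) W] [IsScalarTower k (H β) W] :
    Module (H γ) (P ⊗[k] W) :=
  Module.compHom (P ⊗[k] W) (D.deltaRep α β γ hγ P W).toRingHom

theorem tensorModuleTower (D : HopfGCoalgebra k G H) (α β γ : G) (hγ : γ = α * β)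
    (P W : Type) [AddCommGroup P] [Module k P] [Module (H α) P] [IsScalarTower k (H α) P]
    [AddCommGroup W] [Module k W] [Module (H β) W] [IsScalarTower k (H β) W] :
    letI := D.tensorModule α β γ hγ P W
    IsScalarTower k (H γ) (P ⊗[k] W) := by
  letI := D.tensorModule α β γ hγ P W
  refine ⟨fun c h x => ?_⟩
  show (D.deltaRep α β γ hγ P W (c • h)) x = c • (D.deltaRep α β γ hγ P W h) x
  rw [map_smul]
  rfl

/-- The right partial trace `tr^r_W(f)` of a `k`-linear map `f : P ⊗ W → P ⊗ W`, computed
with the duality morphisms of the pivotal structure (`gβ` is the pivot in degree `β`). -/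
noncomputable def trR (β : G) (P W : Type)
    [AddCommGroup P] [Module k P]
    [AddCommGroup W] [Module k W] [Module (H β) W] [IsScalarTower k (H β) W]
    [FiniteDimensional k W]
    (gβ : H β) (f : (P ⊗[k] W) →ₗ[k] (P ⊗[k] W)) : P →ₗ[k] P :=
  (TensorProduct.rid k P).toLinearMap
    ∘ₗ TensorProduct.map LinearMap.id
        (contractRight k W ∘ₗ TensorProduct.map (Algebra.lsmul k k W gβ) LinearMap.id)
    ∘ₗ (TensorProduct.assoc k P W (Module.Dual k W)).toLinearMap
    ∘ₗ TensorProduct.map f LinearMap.id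
    ∘ₗ (TensorProduct.assoc k P W (Module.Dual k W)).symm.toLinearMap
    ∘ₗ TensorProduct.map LinearMap.id (coevaluation k W)
    ∘ₗ (TensorProduct.rid k P).symm.toLinearMap

/-- The left partial trace `tr^l_W(f)` of a `k`-linear map `f : W ⊗ P → W ⊗ P`, computed
with the duality morphisms of the pivotal structure (`gβinv` is the inverse of the pivot in
degree `β`). -/
noncomputable def trL (β : G) (W P : Type)
    [AddCommGroup P] [Module k P]
    [AddCommGroup W] [Module k W] [Module (H β) W] [IsScalarTower k (H β) W]
    [FiniteDimensional k W]
    (gβinv : H β) (f : (W ⊗[k] P) →ₗ[k] (W ⊗[k] P)) : P →ₗ[k] P :=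
  (TensorProduct.lid k P).toLinearMap
    ∘ₗ TensorProduct.map (contractLeft k W) LinearMap.id
    ∘ₗ (TensorProduct.assoc k (Module.Dual k W) W P).symm.toLinearMap
    ∘ₗ TensorProduct.map LinearMap.id f
    ∘ₗ (TensorProduct.assoc k (Module.Dual k W) W P).toLinearMap
    ∘ₗ TensorProduct.map
        ((TensorProduct.comm k W (Module.Dual k W)).toLinearMap
          ∘ₗ TensorProduct.map (Algebra.lsmul k k W gβinv) LinearMap.id
          ∘ₗ coevaluation k W)
        LinearMap.id
    ∘ₗ (TensorProduct.lid k P).symm.toLinearMap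

end HopfGCoalgebra

/-- The data of a `k`-linear form on `End_{H_γ}(P)` for every `γ ∈ G` and every
finite-dimensional projective `H_γ`-module `P`. -/
abbrev TraceData (k G : Type) [Field k] [Group G] (H : G → Type)
    [∀ γ : G, Ring (H γ)] [∀ γ : G, Algebra k (H γ)] : Type 1 :=
  ∀ (γ : G) (P : Type) [AddCommGroup P] [Module k P] [Module (H γ) P]
    [IsScalarTower k (H γ) P] [FiniteDimensional k P] [Module.Projective (H γ) P],
    (P →ₗ[H γ] P) →ₗ[k] k

namespace HopfGCoalgebra

variable {k G : Type} [Field k] [Group G] {H : G → Type}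
  [∀ γ : G, Ring (H γ)] [∀ γ : G, Algebra k (H γ)]

/-- A cyclic trace on `H`-pmod. -/
def IsCyclicTrace (t : TraceData k G H) : Prop :=
  ∀ (γ : G) (P Q : Type)
    [AddCommGroup P] [Module k P] [Module (H γ) P] [IsScalarTower k (H γ) P]
    [FiniteDimensional k P] [Module.Projective (H γ) P]
    [AddCommGroup Q] [Module k Q] [Module (H γ) Q] [IsScalarTower k (H γ) Q]
    [FiniteDimensional k Q] [Module.Projective (H γ) Q]
    (f : P →ₗ[H γ] Q) (g : Q →ₗ[H γ] P),
    t γ P (g.comp f) = t γ Q (f.comp g)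

/-- The right partial trace property of a trace `t`:
`t_{P⊗W}(f) = t_P(tr^r_W(f))` for every projective `H_α`-module `P`, finite-dimensional
`H_β`-module `W`, and `H_{αβ}`-linear endomorphism `f` of `P ⊗ W`. -/
def HasRightPartialTraceProperty (D : HopfGCoalgebra k G H) (g : ∀ γ : G, (H γ)ˣ)
    (t : TraceData k G H) : Prop :=
  ∀ (α β : G) (P W : Type)
    [AddCommGroup P] [Module k P] [Module (H α) P] [IsScalarTower k (H α) P]
    [FiniteDimensional k P] [Module.Projective (H α) P]
    [AddCommGroup W] [Module k W] [Module (H β) W] [IsScalarTower k (H β) W]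
    [FiniteDimensional k W],
    letI := D.tensorModule α β (α * β) rfl P W
    haveI := D.tensorModuleTower α β (α * β) rfl P W
    ∀ [Module.Projective (H (α * β)) (P ⊗[k] W)]
      (f : (P ⊗[k] W) →ₗ[H (α * β)] (P ⊗[k] W)) (f' : P →ₗ[H α] P),
      f'.restrictScalars k = trR β P W (g β : H β) (f.restrictScalars k) →
      t (α * β) (P ⊗[k] W) f = t α P f'

/-- The left partial trace property of a trace `t`:
`t_{W⊗P}(f) = t_P(tr^l_W(f))` for every projective `H_α`-module `P`, finite-dimensional
`H_β`-module `W`, and `H_{βα}`-linear endomorphism `f` of `W ⊗ P`. -/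
def HasLeftPartialTraceProperty (D : HopfGCoalgebra k G H) (g : ∀ γ : G, (H γ)ˣ)
    (t : TraceData k G H) : Prop :=
  ∀ (α β : G) (P W : Type)
    [AddCommGroup P] [Module k P] [Module (H α) P] [IsScalarTower k (H α) P]
    [FiniteDimensional k P] [Module.Projective (H α) P]
    [AddCommGroup W] [Module k W] [Module (H β) W] [IsScalarTower k (H β) W]
    [FiniteDimensional k W],
    letI := D.tensorModule β α (β * α) rfl W P
    haveI := D.tensorModuleTower β α (β * α) rfl W P
    ∀ [Module.Projective (H (β * α)) (W ⊗[k] P)]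
      (f : (W ⊗[k] P) →ₗ[H (β * α)] (W ⊗[k] P)) (f' : P →ₗ[H α] P),
      f'.restrictScalars k = trL β W P (((g β)⁻¹ : (H β)ˣ) : H β) (f.restrictScalars k) →
      t (β * α) (W ⊗[k] P) f = t α P f'

/-- A right modified trace on `H`-pmod. -/
def IsRightModifiedTrace (D : HopfGCoalgebra k G H) (g : ∀ γ : G, (H γ)ˣ)
    (t : TraceData k G H) : Prop :=
  IsCyclicTrace t ∧ D.HasRightPartialTraceProperty g t

/-- A left modified trace on `H`-pmod. -/
def IsLeftModifiedTrace (D : HopfGCoalgebra k G H) (g : ∀ γ : G, (H γ)ˣ)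
    (t : TraceData k G H) : Prop :=
  IsCyclicTrace t ∧ D.HasLeftPartialTraceProperty g t

end HopfGCoalgebra

namespace HopfGCoalgebra

variable {k G : Type} [Field k] [Group G] {H : G → Type}
  [∀ γ : G, Ring (H γ)] [∀ γ : G, Algebra k (H γ)]

/-- Right multiplication `R_h : x ↦ xh` as an endomorphism of the left regular module. -/
def rmul (γ : G) (h : H γ) : H γ →ₗ[H γ] H γ where
  toFun x := x * h
  map_add' x y := add_mul x y h
  map_smul' c x := by simp [smul_eq_mul, mul_assoc]

/-- Right multiplication as a `k`-linear map `h ↦ R_h`. -/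
def rmulL (γ : G) : H γ →ₗ[k] (H γ →ₗ[H γ] H γ) where
  toFun h := rmul γ h
  map_add' h h' := LinearMap.ext fun x => mul_add x h h'
  map_smul' c h := LinearMap.ext fun x => mul_smul_comm c x h

/-- The linear form `ν_γ : h ↦ t_{H_γ}(R_h)` associated with a trace `t`. -/
noncomputable def nuForm [∀ γ : G, FiniteDimensional k (H γ)] (t : TraceData k G H)
    (γ : G) : H γ →ₗ[k] k :=
  (t γ (H γ)).comp (rmulL γ)

end HopfGCoalgebra

/-
Fix `α, β ∈ G`, `h ∈ H_{αβ}` and a linear form `φ` on `H_β`. The shear `x ⊗ q ↦ Δ(x)(1 ⊗ q)` is an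
isomorphism of `H_{αβ}`-modules from the free module `H_{αβ} ⊗ H_β` onto `H_α ⊗ H_β`, with inverse
`p ⊗ q ↦ p' ⊗ S(p'') q` where `Δ_{αβ,β⁻¹}(p) = p' ⊗ p''`. Hence `H_α ⊗ H_β` is projective, and
`B_φ = (id ⊗ φ) ∘ shear⁻¹` (`shearSlice`) is an `H_{αβ}`-linear map to `H_{αβ}` with
`B_φ(Δ x) = φ(1) x`. With `ι_h(x) = Δ(x h)` (`deltaMulRight`), cyclicity gives
`t(ι_h ∘ B_φ) = t(B_φ ∘ ι_h) = φ(1) ν_{αβ}(h)`. A dual-basis computation, in which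
`S(y'') g_β y' = ε(y) g_β` because `S²` is conjugation by the pivot, identifies the right partial
trace of `ι_h ∘ B_φ` with right multiplication by `(id ⊗ φ(g_β ·)) Δ(h)`, so the partial trace
property yields `ν_α(h₍₁₎) φ(g_β h₍₂₎) = φ(1) ν_{αβ}(h)` for every `φ`. Conjugating by the
grouplike pivot turns this into the right `G`-integral relation.
-/

section Slice

open TensorProduct

variable {k M N : Type} [Field k] [AddCommGroup M] [Module k M] [AddCommGroup N] [Module k N]

noncomputable def sliceRight (φ : N →ₗ[k] k) : M ⊗[k] N →ₗ[k] M :=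
  (TensorProduct.rid k M).toLinearMap ∘ₗ map LinearMap.id φ

@[simp]
theorem sliceRight_tmul (φ : N →ₗ[k] k) (m : M) (n : N) : sliceRight φ (m ⊗ₜ n) = φ n • m :=
  rfl

theorem sum_smul_sliceRight_coord {ι : Type} [Fintype ι] (b : Module.Basis ι k N)
    (ψ : N →ₗ[k] k) (T : N →ₗ[k] N) (X : M ⊗[k] N) :
    ∑ i, ψ (b i) • sliceRight (b.coord i ∘ₗ T) X = sliceRight (ψ ∘ₗ T) X := by
  induction X using TensorProduct.induction_on with
  | zero => simp
  | tmul m n =>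
    simp only [sliceRight_tmul, LinearMap.comp_apply, smul_smul, ← Finset.sum_smul]
    congr 1
    conv_rhs => rw [← b.sum_repr (T n), map_sum]
    simp only [map_smul, smul_eq_mul, Module.Basis.coord_apply, mul_comm]
  | add X₁ X₂ h₁ h₂ => simp only [map_add, smul_add, Finset.sum_add_distrib, h₁, h₂]

theorem apply_lid_map_eq_sliceRight {M' : Type} [AddCommGroup M'] [Module k M']
    (f : M →ₗ[k] k) (ψ : N →ₗ[k] M') (φ : M' →ₗ[k] k) (w : M ⊗[k] N) :
    φ (TensorProduct.lid k M' (map f ψ w)) = f (sliceRight (φ ∘ₗ ψ) w) := by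
  induction w using TensorProduct.induction_on with
  | zero => simp
  | tmul m n => simp [mul_comm]
  | add w₁ w₂ h₁ h₂ => simp only [map_add, h₁, h₂]

theorem sliceRight_tmul_mul {A B : Type} [Ring A] [Algebra k A] [Ring B] [Algebra k B]
    (φ : B →ₗ[k] k) (a : A) (z : B) (W : A ⊗[k] B) :
    sliceRight φ ((a ⊗ₜ z) * W) = a * sliceRight (φ ∘ₗ LinearMap.mulLeft k z) W := by
  induction W using TensorProduct.induction_on with
  | zero => simp
  | tmul x y => simp
  | add W₁ W₂ h₁ h₂ => simp only [mul_add, map_add, h₁, h₂]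

end Slice

namespace HopfGCoalgebra

open TensorProduct

section

variable {k G : Type} [Field k] {H : G → Type} [∀ γ : G, Ring (H γ)] [∀ γ : G, Algebra k (H γ)]

@[simp]
theorem castAlg_self {a : G} (h : a = a) (x : H a) : castAlg k h x = x := rfl

@[simp]
theorem toLinearMap_castAlg_self {a : G} (h : a = a) :
    (castAlg (H := H) k h).toLinearMap = LinearMap.id := rfl

@[simp]
theorem castAlg_castAlg {a b c : G} (h₁ : a = b) (h₂ : b = c) (x : H a) :
    castAlg k h₂ (castAlg k h₁ x) = castAlg k (h₁.trans h₂) x := by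
  subst h₁ h₂; rfl

theorem trR_apply {β : G} (P W : Type) [AddCommGroup P] [Module k P] [AddCommGroup W]
    [Module k W] [Module (H β) W] [IsScalarTower k (H β) W] [FiniteDimensional k W]
    (u : H β) (f : P ⊗[k] W →ₗ[k] P ⊗[k] W) (p : P) :
    trR β P W u f p = ∑ i, sliceRight ((Module.Basis.ofVectorSpace k W).coord i
      ∘ₗ Algebra.lsmul k k W u) (f (p ⊗ₜ Module.Basis.ofVectorSpace k W i)) := by
  simp only [trR, LinearMap.comp_apply, LinearEquiv.coe_coe, TensorProduct.rid_symm_apply,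
    map_tmul, LinearMap.id_apply, coevaluation_apply_one, tmul_sum, map_sum]
  refine Finset.sum_congr rfl fun i _ => ?_
  simp only [TensorProduct.assoc_symm_tmul, map_tmul, LinearMap.id_apply]
  induction f (p ⊗ₜ Module.Basis.ofVectorSpace k W i) using TensorProduct.induction_on with
  | zero => simp
  | tmul x w => simp
  | add X₁ X₂ h₁ h₂ => simp only [add_tmul, map_add, h₁, h₂]

end

variable {k G : Type} [Field k] [Group G] {H : G → Type}
  [∀ γ : G, Ring (H γ)] [∀ γ : G, Algebra k (H γ)]

variable (D : HopfGCoalgebra k G H)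

theorem counit_right_of_eq_one {a c : G} (hc : c = 1) (hac : a = a * c) (x : H a) :
    TensorProduct.rid k (H a) (map LinearMap.id (D.ε.toLinearMap ∘ₗ (castAlg k hc).toLinearMap)
      (D.Δ a c (castAlg k hac x))) = x := by
  subst hc
  simpa using D.counit_right a (castAlg k hac x)

theorem counit_left_of_eq_one {a c : G} (hc : c = 1) (hca : a = c * a) (x : H a) :
    TensorProduct.lid k (H a) (map (D.ε.toLinearMap ∘ₗ (castAlg k hc).toLinearMap) LinearMap.id
      (D.Δ c a (castAlg k hca x))) = x := by
  subst hc
  simpa using D.counit_left a (castAlg k hca x)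

section Collapse

variable {M N : Type} [AddCommGroup M] [Module k M] [AddCommGroup N] [Module k N]

-- `Ψ` evaluated on the iterated coproduct `x₍₁₎ ⊗ x₍₂₎ ⊗ x₍₃₎`, when `Φ` collapses two adjacent
-- factors to `ε(·) m₀`.
theorem coassoc_collapse_right {a b c : G} (hbc : b * c = 1) (Φ : H b ⊗[k] H c →ₗ[k] M)
    (m₀ : M) (hΦ : ∀ y, Φ (D.Δ b c y) = D.ε (castAlg k hbc y) • m₀)
    (Ψ : (H a ⊗[k] H b) ⊗[k] H c →ₗ[k] N) (F : H a ⊗[k] M →ₗ[k] N)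
    (hΨ : ∀ x y z, Ψ ((x ⊗ₜ y) ⊗ₜ z) = F (x ⊗ₜ Φ (y ⊗ₜ z))) (x : H a) :
    Ψ (map (D.Δ a b).toLinearMap LinearMap.id
      (D.Δ (a * b) c (castAlg k (by rw [mul_assoc, hbc, mul_one]) x))) = F (x ⊗ₜ m₀) := by
  have hΨ' : ∀ x (V : H b ⊗[k] H c),
      Ψ ((TensorProduct.assoc k _ _ _).symm (x ⊗ₜ V)) = F (x ⊗ₜ Φ V) := by
    intro x V
    induction V using TensorProduct.induction_on with
    | zero => simp
    | tmul y z => exact hΨ x y z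
    | add V₁ V₂ h₁ h₂ => simp only [tmul_add, map_add, h₁, h₂]
  have hcounit : ∀ W : H a ⊗[k] H (b * c),
      Ψ ((TensorProduct.assoc k _ _ _).symm (map LinearMap.id (D.Δ b c).toLinearMap W))
        = F (TensorProduct.rid k (H a)
            (map LinearMap.id (D.ε.toLinearMap ∘ₗ (castAlg k hbc).toLinearMap) W) ⊗ₜ m₀) := by
    intro W
    induction W using TensorProduct.induction_on with
    | zero => simp
    | tmul x w =>
      simp only [map_tmul, LinearMap.id_apply, AlgHom.toLinearMap_apply, hΨ', hΦ,
        LinearMap.comp_apply, AlgEquiv.toLinearMap_apply, TensorProduct.rid_tmul,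
        tmul_smul, smul_tmul']
    | add W₁ W₂ h₁ h₂ => simp only [map_add, add_tmul, h₁, h₂]
  rw [D.coassoc, hcounit, castAlg_castAlg, counit_right_of_eq_one]

theorem coassoc_collapse_left {a b c : G} (hab : a * b = 1) (Φ : H (a * b) →ₗ[k] M)
    (m₀ : M) (hΦ : ∀ y, Φ y = D.ε (castAlg k hab y) • m₀)
    (Ψ : (H a ⊗[k] H b) ⊗[k] H c →ₗ[k] N) (F : M ⊗[k] H c →ₗ[k] N)
    (hΨ : ∀ y z, Ψ (D.Δ a b y ⊗ₜ z) = F (Φ y ⊗ₜ z)) (x : H c) :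
    Ψ (map (D.Δ a b).toLinearMap LinearMap.id
      (D.Δ (a * b) c (castAlg k (by rw [hab, one_mul]) x))) = F (m₀ ⊗ₜ x) := by
  have hcounit : ∀ W : H (a * b) ⊗[k] H c,
      Ψ (map (D.Δ a b).toLinearMap LinearMap.id W)
        = F (m₀ ⊗ₜ TensorProduct.lid k (H c)
            (map (D.ε.toLinearMap ∘ₗ (castAlg k hab).toLinearMap) LinearMap.id W)) := by
    intro W
    induction W using TensorProduct.induction_on with
    | zero => simp
    | tmul y z =>
      simp only [map_tmul, LinearMap.id_apply, AlgHom.toLinearMap_apply, hΨ, hΦ,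
        LinearMap.comp_apply, AlgEquiv.toLinearMap_apply, TensorProduct.lid_tmul,
        tmul_smul, smul_tmul']
    | add W₁ W₂ h₁ h₂ => simp only [map_add, tmul_add, h₁, h₂]
  rw [hcounit, counit_left_of_eq_one]

end Collapse

section Antipode

-- The antipode axioms are stated in terms of this transport of `S_{γ⁻¹}` along `γ⁻¹⁻¹ = γ`.
noncomputable def antipodeInto (γ : G) : H γ⁻¹ →ₗ[k] H γ :=
  (castAlg k (inv_inv γ)).toLinearMap ∘ₗ D.S γ⁻¹

variable (γ : G)

theorem mul'_antipodeInto_delta (x : H (γ⁻¹ * γ)) :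
    LinearMap.mul' k (H γ) (map (D.antipodeInto γ) LinearMap.id (D.Δ γ⁻¹ γ x))
      = D.ε (castAlg k (inv_mul_cancel γ) x) • 1 :=
  D.antipode_left γ x

theorem mul'_delta_antipodeInto (x : H (γ * γ⁻¹)) :
    LinearMap.mul' k (H γ) (map LinearMap.id (D.antipodeInto γ) (D.Δ γ γ⁻¹ x))
      = D.ε (castAlg k (mul_inv_cancel γ) x) • 1 :=
  D.antipode_right γ x

theorem antipodeInto_one : D.antipodeInto γ 1 = 1 := by
  simpa [Algebra.TensorProduct.one_def] using D.mul'_antipodeInto_delta γ 1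

theorem antipodeInto_delta_mul_tmul_one (x : H (γ⁻¹ * γ)) (y : H γ⁻¹) :
    LinearMap.mul' k (H γ) (map (D.antipodeInto γ) LinearMap.id (D.Δ γ⁻¹ γ x * (y ⊗ₜ 1)))
      = D.ε (castAlg k (inv_mul_cancel γ) x) • D.antipodeInto γ y := by
  -- Evaluate `S(x₍₁₎ y₍₁₎) x₍₂₎ y₍₂₎ S(y₍₃₎)` grouping either `y₍₂₎ S(y₍₃₎)` or the coproduct of
  -- `x y₍₁₎`.
  set Sm : H γ⁻¹ ⊗[k] H γ →ₗ[k] H γ :=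
    LinearMap.mul' k (H γ) ∘ₗ map (D.antipodeInto γ) LinearMap.id
  set Ψ : (H γ⁻¹ ⊗[k] H γ) ⊗[k] H γ⁻¹ →ₗ[k] H γ :=
    LinearMap.mul' k (H γ) ∘ₗ map (Sm ∘ₗ LinearMap.mulLeft k (D.Δ γ⁻¹ γ x)) (D.antipodeInto γ)
  have hSm : ∀ (W : H γ⁻¹ ⊗[k] H γ) (z : H γ), Sm (W * (1 ⊗ₜ z)) = Sm W * z := by
    intro W z
    induction W using TensorProduct.induction_on with
    | zero => simp
    | tmul u v => simp [Sm, mul_assoc]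
    | add W₁ W₂ h₁ h₂ => simp only [add_mul, map_add, h₁, h₂]
  have hright := D.coassoc_collapse_right (a := γ⁻¹) (mul_inv_cancel γ)
    (LinearMap.mul' k (H γ) ∘ₗ map LinearMap.id (D.antipodeInto γ)) 1
    (D.mul'_delta_antipodeInto γ) Ψ (Sm ∘ₗ LinearMap.mulLeft k (D.Δ γ⁻¹ γ x))
    (fun u v w => by simp [Ψ, ← hSm, Algebra.TensorProduct.tmul_mul_tmul, mul_assoc]) y
  have hleft := D.coassoc_collapse_left (c := γ⁻¹) (inv_mul_cancel γ)
    (Sm ∘ₗ LinearMap.mulLeft k (D.Δ γ⁻¹ γ x) ∘ₗ (D.Δ γ⁻¹ γ).toLinearMap)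
    (D.ε (castAlg k (inv_mul_cancel γ) x) • 1)
    (fun w => by
      simp only [Sm, LinearMap.comp_apply, LinearMap.mulLeft_apply, AlgHom.toLinearMap_apply,
        ← map_mul, mul'_antipodeInto_delta]
      rw [map_mul, map_mul, mul_comm, mul_smul])
    Ψ (LinearMap.mul' k (H γ) ∘ₗ map LinearMap.id (D.antipodeInto γ))
    (fun w z => by simp [Ψ]) y
  simpa [Sm] using hright.symm.trans hleft

theorem antipodeInto_mul (x y : H γ⁻¹) :
    D.antipodeInto γ (x * y) = D.antipodeInto γ y * D.antipodeInto γ x := by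
  -- Evaluate `S(x₍₁₎ y) x₍₂₎ S(x₍₃₎)` grouping either `x₍₂₎ S(x₍₃₎)` or `S(x₍₁₎ y) x₍₂₎`.
  set Ψ : (H γ⁻¹ ⊗[k] H γ) ⊗[k] H γ⁻¹ →ₗ[k] H γ :=
    LinearMap.mul' k (H γ) ∘ₗ map (LinearMap.mul' k (H γ) ∘ₗ map (D.antipodeInto γ) LinearMap.id
      ∘ₗ LinearMap.mulRight k (y ⊗ₜ 1)) (D.antipodeInto γ)
  have hright := D.coassoc_collapse_right (a := γ⁻¹) (mul_inv_cancel γ)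
    (LinearMap.mul' k (H γ) ∘ₗ map LinearMap.id (D.antipodeInto γ)) 1
    (D.mul'_delta_antipodeInto γ) Ψ (LinearMap.mul' k (H γ) ∘ₗ map (D.antipodeInto γ) LinearMap.id
      ∘ₗ LinearMap.mulRight k (y ⊗ₜ 1))
    (fun u v w => by simp [Ψ, mul_assoc]) x
  have hleft := D.coassoc_collapse_left (c := γ⁻¹) (inv_mul_cancel γ)
    (LinearMap.mul' k (H γ) ∘ₗ map (D.antipodeInto γ) LinearMap.id
      ∘ₗ LinearMap.mulRight k (y ⊗ₜ 1) ∘ₗ (D.Δ γ⁻¹ γ).toLinearMap)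
    (D.antipodeInto γ y) (fun w => D.antipodeInto_delta_mul_tmul_one γ w y)
    Ψ (LinearMap.mul' k (H γ) ∘ₗ map LinearMap.id (D.antipodeInto γ))
    (fun w z => by simp [Ψ]) x
  simpa using hright.symm.trans hleft

theorem mul'_S_delta (x : H (γ * γ⁻¹)) :
    LinearMap.mul' k (H γ⁻¹) (map (D.S γ) LinearMap.id (D.Δ γ γ⁻¹ x))
      = D.ε (castAlg k (mul_inv_cancel γ) x) • 1 := by
  -- `antipode_left` at `γ⁻¹`, transported along `γ⁻¹⁻¹ = γ`.
  have h : ∀ δ (e : δ = γ⁻¹⁻¹) (x : H (δ * γ⁻¹)),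
      LinearMap.mul' k (H γ⁻¹) (map ((castAlg k (by rw [e, inv_inv])).toLinearMap ∘ₗ D.S δ)
        LinearMap.id (D.Δ δ γ⁻¹ x)) = D.ε (castAlg k (by rw [e, inv_mul_cancel]) x) • 1 := by
    rintro δ rfl x
    exact D.antipode_left γ⁻¹ x
  simpa using h γ (inv_inv γ).symm x

end Antipode

theorem pivot_collapse {g : ∀ γ : G, (H γ)ˣ} (hpiv : D.IsPivot g) (β : G) (y : H (β * β⁻¹)) :
    LinearMap.mul' k (H β) (map (D.antipodeInto β) (LinearMap.mulLeft k (g β : H β))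
      (TensorProduct.comm k _ _ (D.Δ β β⁻¹ y)))
      = D.ε (castAlg k (mul_inv_cancel β) y) • (g β : H β) := by
  have h : ∀ V : H β ⊗[k] H β⁻¹,
      LinearMap.mul' k (H β) (map (D.antipodeInto β) (LinearMap.mulLeft k (g β : H β))
        (TensorProduct.comm k _ _ V))
        = D.antipodeInto β (LinearMap.mul' k (H β⁻¹) (map (D.S β) LinearMap.id V))
          * (g β : H β) := by
    intro V
    induction V using TensorProduct.induction_on with
    | zero => simp
    | tmul u s =>
      have hu : D.antipodeInto β (D.S β u) = (g β : H β) * u * ((g β)⁻¹ : (H β)ˣ) :=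
        hpiv.antipode β u
      simp [D.antipodeInto_mul, hu, mul_assoc]
    | add V₁ V₂ h₁ h₂ => simp only [map_add, add_mul, h₁, h₂]
  rw [h, mul'_S_delta, map_smul, antipodeInto_one, smul_mul_assoc, one_mul]

theorem IsPivot.delta_inv {g : ∀ γ : G, (H γ)ˣ} (hpiv : D.IsPivot g) (α β : G) :
    D.Δ α β (((g (α * β))⁻¹ : (H (α * β))ˣ) : H (α * β))
      = (((g α)⁻¹ : (H α)ˣ) : H α) ⊗ₜ (((g β)⁻¹ : (H β)ˣ) : H β) := by
  refine left_inv_eq_right_inv (a := D.Δ α β (g (α * β) : H (α * β))) ?_ ?_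
  · rw [← map_mul, Units.inv_mul, map_one]
  · rw [hpiv.delta, Algebra.TensorProduct.tmul_mul_tmul, Units.mul_inv, Units.mul_inv,
      Algebra.TensorProduct.one_def]

theorem delta_castAlg_left {a a' : G} (b : G) (e : a = a') (e' : a * b = a' * b) (x : H (a * b)) :
    D.Δ a' b (castAlg k e' x) = map (castAlg k e).toLinearMap LinearMap.id (D.Δ a b x) := by
  subst e; simp

section Shear

variable (α β : G)

noncomputable def deltaMulInv : H α →ₗ[k] H (α * β) ⊗[k] H β⁻¹ :=
  (D.Δ (α * β) β⁻¹).toLinearMap ∘ₗ (castAlg k (mul_inv_cancel_right α β).symm).toLinearMap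

noncomputable def shear : H (α * β) ⊗[k] H β →ₗ[k] H α ⊗[k] H β :=
  LinearMap.mul' k (H α ⊗[k] H β) ∘ₗ
    map (D.Δ α β).toLinearMap Algebra.TensorProduct.includeRight.toLinearMap

noncomputable def shearInv : H α ⊗[k] H β →ₗ[k] H (α * β) ⊗[k] H β :=
  map LinearMap.id (LinearMap.mul' k (H β) ∘ₗ map (D.antipodeInto β) LinearMap.id)
    ∘ₗ (TensorProduct.assoc k _ _ _).toLinearMap ∘ₗ map (D.deltaMulInv α β) LinearMap.id

variable {α β}

@[simp]
theorem shear_tmul (x : H (α * β)) (q : H β) : D.shear α β (x ⊗ₜ q) = D.Δ α β x * (1 ⊗ₜ q) :=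
  rfl

theorem shear_mul_one_tmul (w : H (α * β) ⊗[k] H β) (q : H β) :
    D.shear α β (w * (1 ⊗ₜ q)) = D.shear α β w * (1 ⊗ₜ q) := by
  induction w using TensorProduct.induction_on with
  | zero => simp
  | tmul x s => simp [mul_assoc]
  | add w₁ w₂ h₁ h₂ => simp only [add_mul, map_add, h₁, h₂]

theorem shear_smul (z : H (α * β)) (w : H (α * β) ⊗[k] H β) :
    D.shear α β (z • w) = D.Δ α β z * D.shear α β w := by
  induction w using TensorProduct.induction_on with
  | zero => simp
  | tmul x s => simp [smul_tmul', mul_assoc]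
  | add w₁ w₂ h₁ h₂ => simp only [smul_add, mul_add, map_add, h₁, h₂]

theorem shearInv_mul_one_tmul (m : H α ⊗[k] H β) (q : H β) :
    D.shearInv α β (m * (1 ⊗ₜ q)) = D.shearInv α β m * (1 ⊗ₜ q) := by
  induction m using TensorProduct.induction_on with
  | zero => simp
  | tmul p s =>
    simp only [shearInv, Algebra.TensorProduct.tmul_mul_tmul, mul_one, LinearMap.comp_apply,
      map_tmul, LinearMap.id_apply, LinearEquiv.coe_coe]
    induction D.deltaMulInv α β p using TensorProduct.induction_on with
    | zero => simp
    | tmul a s' => simp [mul_assoc]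
    | add W₁ W₂ h₁ h₂ => simp only [add_tmul, map_add, add_mul, h₁, h₂]
  | add m₁ m₂ h₁ h₂ => simp only [add_mul, map_add, h₁, h₂]

theorem shearInv_tmul_one (p : H α) :
    D.shearInv α β (p ⊗ₜ 1) = map LinearMap.id (D.antipodeInto β) (D.deltaMulInv α β p) := by
  simp only [shearInv, LinearMap.comp_apply, map_tmul, LinearMap.id_apply, LinearEquiv.coe_coe]
  induction D.deltaMulInv α β p using TensorProduct.induction_on with
  | zero => simp
  | tmul a s => simp
  | add W₁ W₂ h₁ h₂ => simp only [add_tmul, map_add, h₁, h₂]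

theorem shearInv_delta (x : H (α * β)) : D.shearInv α β (D.Δ α β x) = x ⊗ₜ 1 := by
  have h := D.coassoc_collapse_right (a := α * β) (inv_mul_cancel β)
    (LinearMap.mul' k (H β) ∘ₗ map (D.antipodeInto β) LinearMap.id) 1
    (D.mul'_antipodeInto_delta β)
    (map LinearMap.id (LinearMap.mul' k (H β) ∘ₗ map (D.antipodeInto β) LinearMap.id)
      ∘ₗ (TensorProduct.assoc k _ _ _).toLinearMap) LinearMap.id (fun _ _ _ => rfl) x
  rw [D.delta_castAlg_left β (mul_inv_cancel_right α β).symm, LinearMap.id_apply] at h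
  rw [← h, map_map, LinearMap.id_comp]
  rfl

theorem shear_shearInv_tmul_one (p : H α) : D.shear α β (D.shearInv α β (p ⊗ₜ 1)) = p ⊗ₜ 1 := by
  set Ψ : (H α ⊗[k] H β) ⊗[k] H β⁻¹ →ₗ[k] H α ⊗[k] H β :=
    LinearMap.mul' k (H α ⊗[k] H β) ∘ₗ
      map LinearMap.id (Algebra.TensorProduct.includeRight.toLinearMap ∘ₗ D.antipodeInto β)
  have hΨ : ∀ W : H (α * β) ⊗[k] H β⁻¹,
      D.shear α β (map LinearMap.id (D.antipodeInto β) W)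
        = Ψ (map (D.Δ α β).toLinearMap LinearMap.id W) := by
    intro W
    induction W using TensorProduct.induction_on with
    | zero => simp
    | tmul a s => simp [Ψ]
    | add W₁ W₂ h₁ h₂ => simp only [map_add, h₁, h₂]
  rw [shearInv_tmul_one, hΨ]
  exact D.coassoc_collapse_right (mul_inv_cancel β)
    (LinearMap.mul' k (H β) ∘ₗ map LinearMap.id (D.antipodeInto β)) 1
    (D.mul'_delta_antipodeInto β) Ψ LinearMap.id (fun _ _ _ => by simp [Ψ]) p

theorem shear_shearInv (m : H α ⊗[k] H β) : D.shear α β (D.shearInv α β m) = m := by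
  induction m using TensorProduct.induction_on with
  | zero => simp
  | tmul p q =>
    have hpq : p ⊗ₜ q = (p ⊗ₜ[k] (1 : H β)) * (1 ⊗ₜ q) := by simp
    rw [hpq, shearInv_mul_one_tmul, shear_mul_one_tmul, shear_shearInv_tmul_one]
  | add m₁ m₂ h₁ h₂ => simp only [map_add, h₁, h₂]

theorem shearInv_shear (w : H (α * β) ⊗[k] H β) : D.shearInv α β (D.shear α β w) = w := by
  induction w using TensorProduct.induction_on with
  | zero => simp
  | tmul x q => simp [shearInv_mul_one_tmul, shearInv_delta]
  | add w₁ w₂ h₁ h₂ => simp only [map_add, h₁, h₂]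

theorem shearInv_delta_mul (z : H (α * β)) (m : H α ⊗[k] H β) :
    D.shearInv α β (D.Δ α β z * m) = z • D.shearInv α β m := by
  conv_lhs => rw [← D.shear_shearInv m, ← shear_smul, shearInv_shear]

noncomputable def pivotShear (α : G) {β : G} (u : H β) : H (α * β) ⊗[k] H β →ₗ[k] H α ⊗[k] H β :=
  LinearMap.mul' k (H α ⊗[k] H β) ∘ₗ
    map (Algebra.TensorProduct.includeRight.toLinearMap ∘ₗ LinearMap.mulRight k u)
      (D.Δ α β).toLinearMap ∘ₗ (TensorProduct.comm k _ _).toLinearMap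

@[simp]
theorem pivotShear_tmul (u : H β) (x : H (α * β)) (q : H β) :
    D.pivotShear α u (x ⊗ₜ q) = (1 ⊗ₜ (q * u)) * D.Δ α β x :=
  rfl

theorem pivotShear_shearInv_tmul_one {g : ∀ γ : G, (H γ)ˣ} (hpiv : D.IsPivot g) (p : H α) :
    D.pivotShear α (g β : H β) (D.shearInv α β (p ⊗ₜ 1)) = p ⊗ₜ (g β : H β) := by
  set Φ : H β ⊗[k] H β⁻¹ →ₗ[k] H β := LinearMap.mul' k (H β) ∘ₗ
    map (D.antipodeInto β) (LinearMap.mulLeft k (g β : H β)) ∘ₗ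
      (TensorProduct.comm k _ _).toLinearMap
  set Ψ : (H α ⊗[k] H β) ⊗[k] H β⁻¹ →ₗ[k] H α ⊗[k] H β :=
    map LinearMap.id Φ ∘ₗ (TensorProduct.assoc k _ _ _).toLinearMap
  have hΨ : ∀ W : H (α * β) ⊗[k] H β⁻¹,
      D.pivotShear α (g β : H β) (map LinearMap.id (D.antipodeInto β) W)
        = Ψ (map (D.Δ α β).toLinearMap LinearMap.id W) := by
    intro W
    induction W using TensorProduct.induction_on with
    | zero => simp
    | tmul a s =>
      simp only [map_tmul, LinearMap.id_apply, pivotShear_tmul, AlgHom.toLinearMap_apply]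
      induction D.Δ α β a using TensorProduct.induction_on with
      | zero => simp
      | tmul a₁ a₂ => simp [Ψ, Φ, mul_assoc]
      | add V₁ V₂ h₁ h₂ => simp only [mul_add, add_tmul, map_add, h₁, h₂]
    | add W₁ W₂ h₁ h₂ => simp only [map_add, h₁, h₂]
  rw [shearInv_tmul_one, hΨ]
  exact D.coassoc_collapse_right (mul_inv_cancel β) Φ (g β : H β) (D.pivot_collapse hpiv β)
    Ψ LinearMap.id (fun _ _ _ => rfl) p

end Shear

section Factorization

variable {α β : G}

noncomputable def shearSlice (φ : Module.Dual k (H β)) : H α ⊗[k] H β →ₗ[k] H (α * β) :=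
  sliceRight φ ∘ₗ D.shearInv α β

noncomputable def deltaMulRight (h : H (α * β)) : H (α * β) →ₗ[k] H α ⊗[k] H β :=
  (D.Δ α β).toLinearMap ∘ₗ LinearMap.mulRight k h

theorem shearSlice_delta_mul (φ : Module.Dual k (H β)) (z : H (α * β)) (m : H α ⊗[k] H β) :
    D.shearSlice φ (D.Δ α β z * m) = z * D.shearSlice φ m := by
  rw [shearSlice, LinearMap.comp_apply, shearInv_delta_mul, LinearMap.comp_apply]
  induction D.shearInv α β m using TensorProduct.induction_on with
  | zero => simp
  | tmul x q => simp [smul_tmul']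
  | add w₁ w₂ h₁ h₂ => simp only [smul_add, mul_add, map_add, h₁, h₂]

theorem shearSlice_deltaMulRight (φ : Module.Dual k (H β)) (h x : H (α * β)) :
    D.shearSlice φ (D.deltaMulRight h x) = φ 1 • (x * h) := by
  simp only [shearSlice, deltaMulRight, LinearMap.comp_apply, LinearMap.mulRight_apply,
    AlgHom.toLinearMap_apply, shearInv_delta, sliceRight_tmul]

theorem trR_deltaMulRight_comp_shearSlice [FiniteDimensional k (H β)] {g : ∀ γ : G, (H γ)ˣ}
    (hpiv : D.IsPivot g) (φ : Module.Dual k (H β)) (h : H (α * β)) (p : H α) :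
    trR β (H α) (H β) (g β : H β) (D.deltaMulRight h ∘ₗ D.shearSlice φ) p
      = p * sliceRight (φ ∘ₗ LinearMap.mulLeft k (g β : H β)) (D.Δ α β h) := by
  rw [trR_apply]
  set b := Module.Basis.ofVectorSpace k (H β)
  -- For `V = a ⊗ s` the dual-basis sum contracts `q ↦ φ(s q)` against `g_β`, leaving
  -- `(id ⊗ φ)((1 ⊗ s g_β) Δ(a h))`.
  have hdual : ∀ V : H (α * β) ⊗[k] H β,
      ∑ i, sliceRight (b.coord i ∘ₗ Algebra.lsmul k k (H β) (g β : H β))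
        (D.Δ α β (sliceRight φ (V * (1 ⊗ₜ b i)) * h))
        = sliceRight φ (D.pivotShear α (g β : H β) V * D.Δ α β h) := by
    intro V
    induction V using TensorProduct.induction_on with
    | zero => simp
    | tmul a s =>
      have hsum := sum_smul_sliceRight_coord b (φ ∘ₗ LinearMap.mulLeft k s)
        (Algebra.lsmul k k (H β) (g β : H β)) (D.Δ α β (a * h))
      simp only [LinearMap.comp_apply, LinearMap.mulLeft_apply] at hsum
      simp only [Algebra.TensorProduct.tmul_mul_tmul, mul_one, sliceRight_tmul, smul_mul_assoc,
        map_smul, pivotShear_tmul, mul_assoc, ← map_mul, sliceRight_tmul_mul, one_mul]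
      rw [hsum]
      congr 2
      ext y
      simp
    | add V₁ V₂ h₁ h₂ =>
      simp only [add_mul, map_add, Finset.sum_add_distrib, h₁, h₂]
  have hq : ∀ q : H β, D.shearSlice φ (p ⊗ₜ q)
      = sliceRight φ (D.shearInv α β (p ⊗ₜ 1) * (1 ⊗ₜ q)) := by
    intro q
    rw [shearSlice, LinearMap.comp_apply, ← shearInv_mul_one_tmul,
      Algebra.TensorProduct.tmul_mul_tmul, one_mul, mul_one]
  simp only [deltaMulRight, LinearMap.comp_apply, hq, AlgHom.toLinearMap_apply,
    LinearMap.mulRight_apply, hdual, D.pivotShear_shearInv_tmul_one hpiv, sliceRight_tmul_mul]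

end Factorization

section TensorModule

variable (α β : G)

theorem tensorModule_smul (z : H (α * β)) (m : H α ⊗[k] H β) :
    letI := D.tensorModule α β (α * β) rfl (H α) (H β)
    z • m = D.Δ α β z * m := by
  change Module.endTensorEndAlgHom
    (Algebra.TensorProduct.map (Algebra.lsmul k k (H α)) (Algebra.lsmul k k (H β))
      (D.Δ α β z)) m = _
  induction D.Δ α β z using TensorProduct.induction_on with
  | zero => simp
  | tmul a b =>
    induction m using TensorProduct.induction_on with
    | zero => simp
    | tmul p q => simp [Module.endTensorEndAlgHom_apply]
    | add m₁ m₂ h₁ h₂ => simp only [map_add, mul_add, h₁, h₂]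
  | add w₁ w₂ h₁ h₂ => simp only [map_add, LinearMap.add_apply, add_mul, h₁, h₂]

theorem projective_tensorModule :
    letI := D.tensorModule α β (α * β) rfl (H α) (H β)
    Module.Projective (H (α * β)) (H α ⊗[k] H β) := by
  let := D.tensorModule α β (α * β) rfl (H α) (H β)
  have : Module.Free (H (α * β)) (H (α * β) ⊗[k] H β) :=
    .of_basis (Algebra.TensorProduct.basis _ (Module.Basis.ofVectorSpace k (H β)))
  let shearH : H (α * β) ⊗[k] H β →ₗ[H (α * β)] H α ⊗[k] H β :=
    { D.shear α β with
      map_smul' := fun z w => by simp [tensorModule_smul, shear_smul] }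
  let shearInvH : H α ⊗[k] H β →ₗ[H (α * β)] H (α * β) ⊗[k] H β :=
    { D.shearInv α β with
      map_smul' := fun z m => by simp [tensorModule_smul, shearInv_delta_mul] }
  exact .of_split shearInvH shearH (LinearMap.ext D.shear_shearInv)

end TensorModule

theorem nuForm_sliceRight_delta [∀ γ : G, FiniteDimensional k (H γ)] {α β : G}
    {g : ∀ γ : G, (H γ)ˣ} (hpiv : D.IsPivot g) {t : TraceData k G H}
    (ht : D.IsRightModifiedTrace g t) (φ : Module.Dual k (H β)) (h : H (α * β)) :
    nuForm t α (sliceRight (φ ∘ₗ LinearMap.mulLeft k (g β : H β)) (D.Δ α β h))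
      = φ 1 * nuForm t (α * β) h := by
  obtain ⟨hcyc, hpt⟩ := ht
  let := D.tensorModule α β (α * β) rfl (H α) (H β)
  have := D.tensorModuleTower α β (α * β) rfl (H α) (H β)
  have := D.projective_tensorModule α β
  let B : H α ⊗[k] H β →ₗ[H (α * β)] H (α * β) :=
    { D.shearSlice φ with
      map_smul' := fun z m => by simp [tensorModule_smul, shearSlice_delta_mul] }
  let ι : H (α * β) →ₗ[H (α * β)] H α ⊗[k] H β :=
    { D.deltaMulRight h with
      map_smul' := fun z x => by simp [tensorModule_smul, deltaMulRight, mul_assoc] }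
  have hBι : B ∘ₗ ι = φ 1 • rmul (α * β) h :=
    LinearMap.ext fun x => D.shearSlice_deltaMulRight φ h x
  have htr : (rmul α (sliceRight (φ ∘ₗ LinearMap.mulLeft k (g β : H β)) (D.Δ α β h))
      ).restrictScalars k = trR β (H α) (H β) (g β : H β) ((ι ∘ₗ B).restrictScalars k) :=
    LinearMap.ext fun p => (D.trR_deltaMulRight_comp_shearSlice hpiv φ h p).symm
  calc nuForm t α (sliceRight (φ ∘ₗ LinearMap.mulLeft k (g β : H β)) (D.Δ α β h))
      = t (α * β) (H α ⊗[k] H β) (ι ∘ₗ B) := (hpt α β (H α) (H β) _ _ htr).symm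
    _ = t (α * β) (H (α * β)) (B ∘ₗ ι) := hcyc _ _ _ B ι
    _ = φ 1 * nuForm t (α * β) h := by rw [hBι, map_smul, smul_eq_mul]; rfl

theorem nuForm_symmetrised [∀ γ : G, FiniteDimensional k (H γ)] {g : ∀ γ : G, (H γ)ˣ}
    (hpiv : D.IsPivot g) {t : TraceData k G H} (ht : D.IsRightModifiedTrace g t) (α β : G)
    (h : H (α * β)) :
    TensorProduct.lid k (H β) (map (nuForm t α) (LinearMap.mulLeft k (g β : H β)) (D.Δ α β h))
      = nuForm t (α * β) h • 1 := by
  refine Module.eval_apply_injective k (LinearMap.ext fun φ => ?_)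
  simp only [map_smul, LinearMap.smul_apply, Module.Dual.eval_apply, smul_eq_mul,
    apply_lid_map_eq_sliceRight, D.nuForm_sliceRight_delta hpiv ht, mul_comm]

theorem isRightIntegral_of_symmetrised {g : ∀ γ : G, (H γ)ˣ} (hpiv : D.IsPivot g)
    (ν : ∀ γ : G, H γ →ₗ[k] k)
    (hν : ∀ (α β : G) (h : H (α * β)), TensorProduct.lid k (H β)
      (map (ν α) (LinearMap.mulLeft k (g β : H β)) (D.Δ α β h)) = ν (α * β) h • 1) :
    D.IsRightIntegral (fun γ => ν γ ∘ₗ LinearMap.mulLeft k (((g γ)⁻¹ : (H γ)ˣ) : H γ)) := by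
  intro α β x
  have hmul : ∀ W : H α ⊗[k] H β, TensorProduct.lid k (H β) (map (ν α)
      (LinearMap.mulLeft k (g β : H β))
        ((((g α)⁻¹ : (H α)ˣ) : H α) ⊗ₜ (((g β)⁻¹ : (H β)ˣ) : H β) * W))
      = TensorProduct.lid k (H β) (map (ν α ∘ₗ LinearMap.mulLeft k (((g α)⁻¹ : (H α)ˣ) : H α))
        LinearMap.id W) := by
    intro W
    induction W using TensorProduct.induction_on with
    | zero => simp
    | tmul a b => simp
    | add W₁ W₂ h₁ h₂ => simp only [mul_add, map_add, h₁, h₂]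
  simpa [hpiv.delta_inv, hmul] using hν α β ((((g (α * β))⁻¹ : (H (α * β))ˣ) : H (α * β)) * x)

end HopfGCoalgebra

open HopfGCoalgebra in
/-- For a right modified trace `t` on `H`-pmod, the family `ν_α(h) := t_{H_α}(R_h)` satisfies
the defining relation of a symmetrised right `G`-integral:
`ν_α(h₍₁₎) • g_β h₍₂₎ = ν_{αβ}(h) • 1`; equivalently `x ↦ ν_α(g_α⁻¹ x)` is a right
`G`-integral. -/
theorem right_modified_trace_gives_symmetrised_integral
    {k G : Type} [Field k] [Group G] {H : G → Type}
    [∀ γ : G, Ring (H γ)] [∀ γ : G, Algebra k (H γ)] [∀ γ : G, FiniteDimensional k (H γ)]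
    (D : HopfGCoalgebra k G H) (g : ∀ γ : G, (H γ)ˣ) (hpiv : D.IsPivot g)
    (huni : D.IsUnimodular)
    (t : TraceData k G H) (ht : D.IsRightModifiedTrace g t) :
    (∀ (α β : G) (h : H (α * β)),
        (TensorProduct.lid k (H β))
          ((TensorProduct.map (nuForm t α) (LinearMap.mulLeft k (g β : H β)))
            (D.Δ α β h))
          = nuForm t (α * β) h • 1)
    ∧ D.IsRightIntegral
        (fun γ : G => nuForm t γ ∘ₗ LinearMap.mulLeft k (((g γ)⁻¹ : (H γ)ˣ) : H γ)) := by
  have hsym := D.nuForm_symmetrised hpiv ht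
  exact ⟨hsym, D.isRightIntegral_of_symmetrised hpiv _ hsym⟩
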